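/- arXiv:1605.09283 — 11 statements merged into one kernel-verified Lean document; each statement's English description precedes it below -/
import Mathlib

section
/- Let a₁, a₂, a₃, a₄ ∈ ℂ and θ₁, θ₂, θ₃, θ₄ ∈ ℝ with θ₁ + θ₂ + θ₃ + θ₄ = (2n+1)π for some integer n. Then the point b = B((a₁,θ₁),(a₂,θ₂),(a₃,θ₃),(a₄,θ₄)) is a fixed point of the composition r(a₁,θ₁) ∘ r(a₂,θ₂) ∘ r(a₃,θ₃) ∘ r(a₄,θ₄), and this composition equals the point reflection z ↦ 2b − z; in particular the composition is an involution: applying it twice gives the identity map on ℂ. -/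
/-- Rotation about the point `a` through the angle `θ`. -/
noncomputable def rot (a : ℂ) (θ : ℝ) : ℂ → ℂ :=
  fun z => Complex.exp (θ * Complex.I) * (z - a) + a

/-- The fixed point of the composition of four rotations (each `pᵢ = (aᵢ, θᵢ)` is a
center of rotation together with a rotation angle), when the angles sum to an odd
multiple of `π`. -/
noncomputable def B (p₁ p₂ p₃ p₄ : ℂ × ℝ) : ℂ :=
  (1 / 2) * (p₁.1 * (1 - Complex.exp (p₁.2 * Complex.I))
    + p₂.1 * Complex.exp (p₁.2 * Complex.I) * (1 - Complex.exp (p₂.2 * Complex.I))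
    + p₃.1 * Complex.exp ((p₁.2 + p₂.2 : ℝ) * Complex.I) * (1 - Complex.exp (p₃.2 * Complex.I))
    + p₄.1 * Complex.exp ((p₁.2 + p₂.2 + p₃.2 : ℝ) * Complex.I) * (1 - Complex.exp (p₄.2 * Complex.I)))

theorem fixed_point_of_four_rotations (a₁ a₂ a₃ a₄ : ℂ) (θ₁ θ₂ θ₃ θ₄ : ℝ)
    (h : ∃ n : ℤ, θ₁ + θ₂ + θ₃ + θ₄ = (2 * n + 1) * Real.pi) :
    (rot a₁ θ₁ ∘ rot a₂ θ₂ ∘ rot a₃ θ₃ ∘ rot a₄ θ₄)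
        (B (a₁, θ₁) (a₂, θ₂) (a₃, θ₃) (a₄, θ₄)) = B (a₁, θ₁) (a₂, θ₂) (a₃, θ₃) (a₄, θ₄) ∧
    (∀ z : ℂ, (rot a₁ θ₁ ∘ rot a₂ θ₂ ∘ rot a₃ θ₃ ∘ rot a₄ θ₄) z =
        2 * B (a₁, θ₁) (a₂, θ₂) (a₃, θ₃) (a₄, θ₄) - z) ∧
    (∀ z : ℂ, (rot a₁ θ₁ ∘ rot a₂ θ₂ ∘ rot a₃ θ₃ ∘ rot a₄ θ₄)
        ((rot a₁ θ₁ ∘ rot a₂ θ₂ ∘ rot a₃ θ₃ ∘ rot a₄ θ₄) z) = z) := by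
  obtain ⟨n, hn⟩ := h
  have key : Complex.exp (↑θ₁ * Complex.I) * Complex.exp (↑θ₂ * Complex.I)
      * Complex.exp (↑θ₃ * Complex.I) * Complex.exp (↑θ₄ * Complex.I) = -1 := by
    rw [← Complex.exp_add, ← Complex.exp_add, ← Complex.exp_add]
    have h2 : (θ₁ : ℂ) * Complex.I + ↑θ₂ * Complex.I + ↑θ₃ * Complex.I + ↑θ₄ * Complex.I
        = ↑Real.pi * Complex.I + 2 * ↑n * ↑Real.pi * Complex.I := by
      have hc : (θ₁ : ℂ) + θ₂ + θ₃ + θ₄ = (2 * (n : ℂ) + 1) * (Real.pi : ℂ) := by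
        exact_mod_cast congrArg (fun x : ℝ => (x : ℂ)) hn
      linear_combination hc * Complex.I
    rw [h2, Complex.exp_add, Complex.exp_pi_mul_I]
    have : Complex.exp (2 * ↑n * ↑Real.pi * Complex.I) = 1 := by
      have := Complex.exp_int_mul_two_pi_mul_I n
      rw [← this]; ring_nf
    rw [this]; ring
  have main : ∀ z : ℂ, (rot a₁ θ₁ ∘ rot a₂ θ₂ ∘ rot a₃ θ₃ ∘ rot a₄ θ₄) z =
      2 * B (a₁, θ₁) (a₂, θ₂) (a₃, θ₃) (a₄, θ₄) - z := by
    intro z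
    simp only [Function.comp, rot, B]
    simp only [show ((θ₁ + θ₂ : ℝ) : ℂ) * Complex.I = ↑θ₁ * Complex.I + ↑θ₂ * Complex.I by
        push_cast; ring,
      show ((θ₁ + θ₂ + θ₃ : ℝ) : ℂ) * Complex.I
        = ↑θ₁ * Complex.I + ↑θ₂ * Complex.I + ↑θ₃ * Complex.I by push_cast; ring,
      Complex.exp_add]
    linear_combination z * key
  refine ⟨?_, main, ?_⟩
  · rw [main]; ring
  · intro z; rw [main, main]; ring
end

section
/- Let a₁, a₂, a₃, a₄ ∈ ℂ and θ₁, θ₂, θ₃, θ₄ ∈ ℝ with θ₁ + θ₂ + θ₃ + θ₄ = (2n+1)π for some integer n. Then B((a₁,θ₁),(a₂,θ₂),(a₃,θ₃),(a₄,θ₄)) − B((a₁,θ₁),(a₂,θ₂),(a₄,θ₄),(a₃,θ₃)) + B((a₂,θ₂),(a₁,θ₁),(a₄,θ₄),(a₃,θ₃)) − B((a₂,θ₂),(a₁,θ₁),(a₃,θ₃),(a₄,θ₄)) = 0; equivalently, the four points B((a₁,θ₁),(a₂,θ₂),(a₃,θ₃),(a₄,θ₄)), B((a₁,θ₁),(a₂,θ₂),(a₄,θ₄),(a₃,θ₃)),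 B((a₂,θ₂),(a₁,θ₁),(a₄,θ₄),(a₃,θ₃)), B((a₂,θ₂),(a₁,θ₁),(a₃,θ₃),(a₄,θ₄)), taken in this order, form a (possibly degenerate) parallelogram. -/
theorem parallelogram_relation (a₁ a₂ a₃ a₄ : ℂ) (θ₁ θ₂ θ₃ θ₄ : ℝ)
    (h : ∃ n : ℤ, θ₁ + θ₂ + θ₃ + θ₄ = (2 * n + 1) * Real.pi) :
    B (a₁, θ₁) (a₂, θ₂) (a₃, θ₃) (a₄, θ₄) - B (a₁, θ₁) (a₂, θ₂) (a₄, θ₄) (a₃, θ₃)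
      + B (a₂, θ₂) (a₁, θ₁) (a₄, θ₄) (a₃, θ₃) - B (a₂, θ₂) (a₁, θ₁) (a₃, θ₃) (a₄, θ₄) = 0 := by
  simp only [B, Complex.ofReal_add, add_mul, Complex.exp_add]
  ring
end

section
/- Let a₁, a₂, a₃, a₄ ∈ ℂ and θ₁, θ₂, θ₃, θ₄ ∈ ℝ with θ₁ + θ₂ + θ₃ + θ₄ = (2n+1)π for some integer n, and suppose θ₁ + θ₂ is not an integer multiple of 2π. Define O₁₂ := (1/(2·(1 − e^{i(θ₁+θ₂)})))·(a₁·(1 − e^{iθ₁})·(1 + e^{iθ₂}) + a₂·(1 − e^{iθ₂})·(1 + e^{iθ₁})). Then the rotation about O₁₂ through the angle −(θ₁+θ₂) maps B((a₁,θ₁),(a₂,θ₂),(a₃,θ₃),(a₄,θ₄)) to B((a₃,θ₃),(a₄,θ₄),(a₂,θ₂),(a₁,θ₁)); that is, e^{−i(θ₁+θ₂)}·(B((a₁,θ₁),(a₂,θ₂),(a₃,θ₃),(a₄,θ₄)) − O₁₂) + O₁₂ = B((a₃,θ₃),(a₄,θ₄),(a₂,θ₂),(a₁,θ₁)). -/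
private lemma key_alg (a₁ a₂ a₃ a₄ E₁ E₂ E₃ E₄ : ℂ)
    (h1 : E₁ ≠ 0) (h2 : E₂ ≠ 0) (h3 : E₃ ≠ 0)
    (hsum : E₁ * E₂ * E₃ * E₄ = -1) (hne : (1 : ℂ) - E₁ * E₂ ≠ 0) :
    (E₁ * E₂)⁻¹
        * ((1 / 2) * (a₁ * (1 - E₁) + a₂ * E₁ * (1 - E₂) + a₃ * (E₁ * E₂) * (1 - E₃)
              + a₄ * (E₁ * E₂ * E₃) * (1 - E₄))
          - (1 / (2 * (1 - E₁ * E₂))) * (a₁ * (1 - E₁) * (1 + E₂) + a₂ * (1 - E₂) * (1 + E₁)))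
      + (1 / (2 * (1 - E₁ * E₂))) * (a₁ * (1 - E₁) * (1 + E₂) + a₂ * (1 - E₂) * (1 + E₁))
      = (1 / 2) * (a₃ * (1 - E₃) + a₄ * E₃ * (1 - E₄) + a₂ * (E₃ * E₄) * (1 - E₂)
          + a₁ * (E₃ * E₄ * E₂) * (1 - E₁)) := by
  have hden : E₁ * E₂ * (2 * (2 * (1 - E₁ * E₂))) * (2 * (1 - E₁ * E₂)) ≠ 0 := by
    apply mul_ne_zero
    apply mul_ne_zero (mul_ne_zero h1 h2)
    · exact mul_ne_zero two_ne_zero (mul_ne_zero two_ne_zero hne)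
    · exact mul_ne_zero two_ne_zero hne
  field_simp
  linear_combination (-(1 - E₁ * E₂) * (a₁ * (1 - E₁) * E₂ + a₂ * (1 - E₂))) * hsum

theorem rotation_O12_maps_b1234_to_b3421 (a₁ a₂ a₃ a₄ : ℂ) (θ₁ θ₂ θ₃ θ₄ : ℝ)
    (h : ∃ n : ℤ, θ₁ + θ₂ + θ₃ + θ₄ = (2 * n + 1) * Real.pi)
    (h12 : ∀ k : ℤ, θ₁ + θ₂ ≠ k * (2 * Real.pi)) :
    let O₁₂ : ℂ := (1 / (2 * (1 - Complex.exp ((θ₁ + θ₂ : ℝ) * Complex.I))))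
      * (a₁ * (1 - Complex.exp (θ₁ * Complex.I)) * (1 + Complex.exp (θ₂ * Complex.I))
        + a₂ * (1 - Complex.exp (θ₂ * Complex.I)) * (1 + Complex.exp (θ₁ * Complex.I)))
    Complex.exp ((-(θ₁ + θ₂) : ℝ) * Complex.I)
        * (B (a₁, θ₁) (a₂, θ₂) (a₃, θ₃) (a₄, θ₄) - O₁₂) + O₁₂
      = B (a₃, θ₃) (a₄, θ₄) (a₂, θ₂) (a₁, θ₁) := by
  intro O₁₂
  obtain ⟨n, hn⟩ := h
  have hsum : Complex.exp (θ₁ * Complex.I) * Complex.exp (θ₂ * Complex.I)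
      * Complex.exp (θ₃ * Complex.I) * Complex.exp (θ₄ * Complex.I) = -1 := by
    rw [← Complex.exp_add, ← Complex.exp_add, ← Complex.exp_add]
    have e1 : (θ₁ : ℂ) * Complex.I + θ₂ * Complex.I + θ₃ * Complex.I + θ₄ * Complex.I
        = ((θ₁ + θ₂ + θ₃ + θ₄ : ℝ) : ℂ) * Complex.I := by push_cast; ring
    rw [e1, hn]
    have e2 : (((2 * (n : ℝ) + 1) * Real.pi : ℝ) : ℂ) * Complex.I
        = (n : ℂ) * (2 * Real.pi * Complex.I) + Real.pi * Complex.I := by push_cast; ring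
    rw [e2, Complex.exp_add, Complex.exp_int_mul_two_pi_mul_I, Complex.exp_pi_mul_I]
    ring
  have h12' : Complex.exp ((θ₁ + θ₂ : ℝ) * Complex.I)
      = Complex.exp (θ₁ * Complex.I) * Complex.exp (θ₂ * Complex.I) := by
    rw [← Complex.exp_add]; congr 1; push_cast; ring
  have hne : (1 : ℂ) - Complex.exp (θ₁ * Complex.I) * Complex.exp (θ₂ * Complex.I) ≠ 0 := by
    intro hc
    have he : Complex.exp ((θ₁ + θ₂ : ℝ) * Complex.I) = 1 := by
      rw [h12']; linear_combination -hc
    rw [Complex.exp_eq_one_iff] at he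
    obtain ⟨k, hk⟩ := he
    have hk' : ((θ₁ + θ₂ : ℝ) : ℂ) * Complex.I = ((k : ℂ) * (2 * Real.pi)) * Complex.I := by
      rw [hk]; ring
    have hc2 : ((θ₁ + θ₂ : ℝ) : ℂ) = (k : ℂ) * (2 * Real.pi) :=
      mul_right_cancel₀ Complex.I_ne_zero hk'
    have : (θ₁ + θ₂ : ℝ) = (k : ℝ) * (2 * Real.pi) := by exact_mod_cast hc2
    exact h12 k this
  have hneg : Complex.exp ((-(θ₁ + θ₂) : ℝ) * Complex.I)
      = (Complex.exp (θ₁ * Complex.I) * Complex.exp (θ₂ * Complex.I))⁻¹ := by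
    rw [← h12', ← Complex.exp_neg]; congr 1; push_cast; ring
  have h123 : Complex.exp ((θ₁ + θ₂ + θ₃ : ℝ) * Complex.I)
      = Complex.exp (θ₁ * Complex.I) * Complex.exp (θ₂ * Complex.I)
        * Complex.exp (θ₃ * Complex.I) := by
    rw [← Complex.exp_add, ← Complex.exp_add]; congr 1; push_cast; ring
  have h34 : Complex.exp ((θ₃ + θ₄ : ℝ) * Complex.I)
      = Complex.exp (θ₃ * Complex.I) * Complex.exp (θ₄ * Complex.I) := by
    rw [← Complex.exp_add]; congr 1; push_cast; ring
  have h342 : Complex.exp ((θ₃ + θ₄ + θ₂ : ℝ) * Complex.I)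
      = Complex.exp (θ₃ * Complex.I) * Complex.exp (θ₄ * Complex.I)
        * Complex.exp (θ₂ * Complex.I) := by
    rw [← Complex.exp_add, ← Complex.exp_add]; congr 1; push_cast; ring
  simp only [B, O₁₂, h12', hneg, h123, h34, h342]
  exact key_alg a₁ a₂ a₃ a₄ _ _ _ _ (Complex.exp_ne_zero _) (Complex.exp_ne_zero _)
    (Complex.exp_ne_zero _) hsum hne
end

section
/- Let a₁, a₂, a₃, a₄ ∈ ℂ and θ₁, θ₂, θ₃, θ₄ ∈ ℝ with θ₁ + θ₂ + θ₃ + θ₄ = (2n+1)π for some integer n. For a permutation (i,j,k,l) of (1,2,3,4), let A(i,j,k,l) := Im[(B((a_j,θ_j),(a_i,θ_i),(a_k,θ_k),(a_l,θ_l)) − B((a_i,θ_i),(a_j,θ_j),(a_k,θ_k),(a_l,θ_l))) · conj(B((a_i,θ_i),(a_j,θ_j),(a_l,θ_l),(a_k,θ_k)) − B((a_i,θ_i),(a_j,θ_j),(a_k,θ_k),(a_l,θ_l)))] (the signed area of the parallelogram P_{ijkl}). Then A(1,2,3,4) = A(1,3,2,4) + A(1,4,3,2). -/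
lemma Bdiff_swap12 (a b c d : ℂ) (α β γ δ : ℝ) :
    B (b, β) (a, α) (c, γ) (d, δ) - B (a, α) (b, β) (c, γ) (d, δ)
      = (b - a) / 2 * (1 - Complex.exp ((α : ℂ) * Complex.I))
          * (1 - Complex.exp ((β : ℂ) * Complex.I)) := by
  simp only [B, Complex.ofReal_add, add_mul, Complex.exp_add]
  ring

lemma Bdiff_swap34 (a b c d : ℂ) (α β γ δ : ℝ) :
    B (a, α) (b, β) (d, δ) (c, γ) - B (a, α) (b, β) (c, γ) (d, δ)
      = Complex.exp ((α : ℂ) * Complex.I) * Complex.exp ((β : ℂ) * Complex.I)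
          * ((d - c) / 2) * (1 - Complex.exp ((γ : ℂ) * Complex.I))
          * (1 - Complex.exp ((δ : ℂ) * Complex.I)) := by
  simp only [B, Complex.ofReal_add, add_mul, Complex.exp_add]
  ring

lemma key (z w u v W b c : ℂ) (hz : z ≠ 0) (hw : w ≠ 0) (hu : u ≠ 0)
    (hcz : (starRingEnd ℂ) z = z⁻¹) (hcw : (starRingEnd ℂ) w = w⁻¹)
    (hcu : (starRingEnd ℂ) u = u⁻¹) (hcv : (starRingEnd ℂ) v = v⁻¹)
    (hp : z * w * u * v = -1)
    (hW : (1 - z) * (1 - w) * (1 - u) * (1 - v) = W) :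
    (b / 2 * (1 - z) * (1 - w)
        * (starRingEnd ℂ) (z * w * (c / 2) * (1 - u) * (1 - v))).im
      = (-(b * (starRingEnd ℂ) c * W) / 4).im := by
  have hv0 : v ≠ 0 := by
    intro h0
    rw [h0, mul_zero] at hp
    exact absurd hp (by norm_num)
  have hinvprod : z⁻¹ * w⁻¹ * u⁻¹ * v⁻¹ = -1 := by
    rw [← mul_inv, ← mul_inv, ← mul_inv, hp]
    norm_num
  congr 1
  simp only [map_mul, map_sub, map_one, map_div₀, map_ofNat, hcz, hcw, hcu, hcv]
  rw [← hW, show (1 : ℂ) - u⁻¹ = -(u⁻¹ * (1 - u)) by field_simp; ring,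
    show (1 : ℂ) - v⁻¹ = -(v⁻¹ * (1 - v)) by field_simp; ring]
  linear_combination (b * (starRingEnd ℂ) c
    * ((1 - z) * (1 - w) * (1 - u) * (1 - v)) / 4) * hinvprod

set_option maxHeartbeats 1000000 in
theorem area_additivity (a₁ a₂ a₃ a₄ : ℂ) (θ₁ θ₂ θ₃ θ₄ : ℝ)
    (h : ∃ n : ℤ, θ₁ + θ₂ + θ₃ + θ₄ = (2 * n + 1) * Real.pi) :
    let A : ℂ × ℝ → ℂ × ℝ → ℂ × ℝ → ℂ × ℝ → ℝ := fun p q r s =>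
      ((B q p r s - B p q r s) * (starRingEnd ℂ) (B p q s r - B p q r s)).im
    A (a₁, θ₁) (a₂, θ₂) (a₃, θ₃) (a₄, θ₄)
      = A (a₁, θ₁) (a₃, θ₃) (a₂, θ₂) (a₄, θ₄) + A (a₁, θ₁) (a₄, θ₄) (a₃, θ₃) (a₂, θ₂) := by
  intro A
  obtain ⟨n, hn⟩ := h
  have him : ∀ (u v w : ℂ), (starRingEnd ℂ) (u - v - w) = u - v - w →
      u.im = v.im + w.im := by
    intro u v w h
    have := congrArg Complex.im h
    simp [Complex.sub_im, Complex.conj_im] at this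
    linarith
  have hA : ∀ p q r s : ℂ, ∀ α β γ δ : ℝ,
      A (p, α) (q, β) (r, γ) (s, δ)
        = ((q - p) / 2 * (1 - Complex.exp ((α : ℂ) * Complex.I))
            * (1 - Complex.exp ((β : ℂ) * Complex.I))
          * (starRingEnd ℂ) (Complex.exp ((α : ℂ) * Complex.I)
            * Complex.exp ((β : ℂ) * Complex.I)
            * ((s - r) / 2) * (1 - Complex.exp ((γ : ℂ) * Complex.I))
            * (1 - Complex.exp ((δ : ℂ) * Complex.I)))).im := by
    intro p q r s α β γ δ
    simp only [A]
    rw [Bdiff_swap12 p q r s α β γ δ, Bdiff_swap34 p q r s α β γ δ]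
  rw [hA, hA, hA]
  set z₁ := Complex.exp ((θ₁ : ℂ) * Complex.I) with hz₁
  set z₂ := Complex.exp ((θ₂ : ℂ) * Complex.I) with hz₂
  set z₃ := Complex.exp ((θ₃ : ℂ) * Complex.I) with hz₃
  set z₄ := Complex.exp ((θ₄ : ℂ) * Complex.I) with hz₄
  have hne₁ : z₁ ≠ 0 := Complex.exp_ne_zero _
  have hne₂ : z₂ ≠ 0 := Complex.exp_ne_zero _
  have hne₃ : z₃ ≠ 0 := Complex.exp_ne_zero _
  have hne₄ : z₄ ≠ 0 := Complex.exp_ne_zero _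
  have hc : ∀ θ : ℝ, (starRingEnd ℂ) (Complex.exp ((θ : ℂ) * Complex.I))
      = (Complex.exp ((θ : ℂ) * Complex.I))⁻¹ := by
    intro θ
    rw [← Complex.exp_conj, map_mul, Complex.conj_ofReal, Complex.conj_I,
      mul_neg, Complex.exp_neg]
  have hc₁ : (starRingEnd ℂ) z₁ = z₁⁻¹ := hc θ₁
  have hc₂ : (starRingEnd ℂ) z₂ = z₂⁻¹ := hc θ₂
  have hc₃ : (starRingEnd ℂ) z₃ = z₃⁻¹ := hc θ₃
  have hc₄ : (starRingEnd ℂ) z₄ = z₄⁻¹ := hc θ₄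
  have hprod : z₁ * z₂ * z₃ * z₄ = -1 := by
    rw [hz₁, hz₂, hz₃, hz₄, ← Complex.exp_add, ← Complex.exp_add, ← Complex.exp_add]
    have h' : ((θ₁ + θ₂ + θ₃ + θ₄ : ℝ) : ℂ) = (((2 * n + 1) * Real.pi : ℝ) : ℂ) :=
      Complex.ofReal_inj.mpr hn
    push_cast at h'
    have : (θ₁ : ℂ) * Complex.I + (θ₂ : ℂ) * Complex.I + (θ₃ : ℂ) * Complex.I
        + (θ₄ : ℂ) * Complex.I = (n : ℂ) * (2 * (Real.pi : ℂ) * Complex.I)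
          + (Real.pi : ℂ) * Complex.I := by
      linear_combination h' * Complex.I
    rw [this, Complex.exp_add, Complex.exp_int_mul_two_pi_mul_I, Complex.exp_pi_mul_I]
    ring
  set W := (1 - z₁) * (1 - z₂) * (1 - z₃) * (1 - z₄) with hWdef
  have hW1 : (1 - z₁) * (1 - z₂) * (1 - z₃) * (1 - z₄) = W := hWdef.symm
  have hW2 : (1 - z₁) * (1 - z₃) * (1 - z₂) * (1 - z₄) = W := by rw [hWdef]; ring
  have hW3 : (1 - z₁) * (1 - z₄) * (1 - z₃) * (1 - z₂) = W := by rw [hWdef]; ring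
  have hp2 : z₁ * z₃ * z₂ * z₄ = -1 := by linear_combination hprod
  have hp3 : z₁ * z₄ * z₃ * z₂ = -1 := by linear_combination hprod
  rw [key z₁ z₂ z₃ z₄ W (a₂ - a₁) (a₄ - a₃) hne₁ hne₂ hne₃ hc₁ hc₂ hc₃ hc₄ hprod hW1,
    key z₁ z₃ z₂ z₄ W (a₃ - a₁) (a₄ - a₂) hne₁ hne₃ hne₂ hc₁ hc₃ hc₂ hc₄ hp2 hW2,
    key z₁ z₄ z₃ z₂ W (a₄ - a₁) (a₂ - a₃) hne₁ hne₄ hne₃ hc₁ hc₄ hc₃ hc₂ hp3 hW3]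
  have hcW : (starRingEnd ℂ) W = -W := by
    have hz4 : z₄ = -1 / (z₁ * z₂ * z₃) := by
      rw [eq_div_iff (mul_ne_zero (mul_ne_zero hne₁ hne₂) hne₃)]
      linear_combination hprod
    rw [hWdef]
    simp only [map_mul, map_sub, map_one, hc₁, hc₂, hc₃, hc₄]
    rw [hz4]
    field_simp
    ring
  refine him _ _ _ ?_
  simp only [map_sub, map_mul, map_neg, map_div₀, map_ofNat, Complex.conj_conj, hcW]
  ring
end

section
/- Let a₁, a₂, a₃, a₄ ∈ ℂ and θ₁, θ₂, θ₃, θ₄ ∈ ℝ with θ₁ + θ₂ + θ₃ + θ₄ = (2n+1)π for some integer n. For angles φ = (φ₁,φ₂,φ₃,φ₄) and a permutation (i,j,k,l) of (1,2,3,4), let A_φ(i,j,k,l) := Im[(B((a_j,φ_j),(a_i,φ_i),(a_k,φ_k),(a_l,φ_l)) − B((a_i,φ_i),(a_j,φ_j),(a_k,φ_k),(a_l,φ_l))) · conj(B((a_i,φ_i),(a_j,φ_j),(a_l,φ_l),(a_k,φ_k)) − B((a_i,φ_i),(a_j,φ_j),(a_k,φ_k),(a_l,φ_l)))]. Then A_θ(1,2,3,4)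 = A_{−θ}(1,2,4,3), where −θ = (−θ₁,−θ₂,−θ₃,−θ₄). (In the paper's notation, with α_{i,n} = ((2n+1)/2)·â_i this reads 𝒜_{P_{ijkl,n}} = 𝒜_{P_{ijlk,−n−1}}.) -/
set_option maxHeartbeats 2000000

lemma Bdiff1 (a b : ℂ) (α β : ℝ) (r s : ℂ × ℝ) :
    B (b, β) (a, α) r s - B (a, α) (b, β) r s
      = (1/2) * (b - a) * (1 - Complex.exp (α * Complex.I)) * (1 - Complex.exp (β * Complex.I)) := by
  simp only [B, Complex.ofReal_add, add_mul, Complex.exp_add]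
  ring

lemma Bdiff2 (p q : ℂ × ℝ) (c d : ℂ) (γ δ : ℝ) :
    B p q (d, δ) (c, γ) - B p q (c, γ) (d, δ)
      = (1/2) * Complex.exp (p.2 * Complex.I) * Complex.exp (q.2 * Complex.I) * (d - c)
        * (1 - Complex.exp (γ * Complex.I)) * (1 - Complex.exp (δ * Complex.I)) := by
  simp only [B, Complex.ofReal_add, add_mul, Complex.exp_add]
  ring

lemma aux_area_inv (a₁ a₂ a₃ a₄ b₁ b₂ b₃ b₄ z₁ z₂ z₃ : ℂ) (hz₁ : z₁ ≠ 0) (hz₂ : z₂ ≠ 0) (hz₃ : z₃ ≠ 0) :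
    1 / 2 * (a₂ - a₁) * (1 - z₁) * (1 - z₂) *
        (1 / 2 * z₁⁻¹ * z₂⁻¹ * (b₄ - b₃) * (1 - z₃⁻¹) * (1 - -(z₁⁻¹ * z₂⁻¹ * z₃⁻¹)⁻¹)) -
      1 / 2 * (b₂ - b₁) * (1 - z₁⁻¹) * (1 - z₂⁻¹) *
        (1 / 2 * z₁ * z₂ * (a₄ - a₃) * (1 - z₃) * (1 - -(z₁ * z₂ * z₃)⁻¹)) =
    1 / 2 * (a₂ - a₁) * (1 - z₁⁻¹) * (1 - z₂⁻¹) *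
        (1 / 2 * z₁ * z₂ * (b₃ - b₄) * (1 - (-(z₁⁻¹ * z₂⁻¹ * z₃⁻¹)⁻¹)⁻¹) * (1 - z₃)) -
      1 / 2 * (b₂ - b₁) * (1 - z₁) * (1 - z₂) *
        (1 / 2 * z₁⁻¹ * z₂⁻¹ * (a₃ - a₄) * (1 - (-(z₁ * z₂ * z₃)⁻¹)⁻¹) * (1 - z₃⁻¹)) := by
  set D := (a₂ - a₁) * (b₄ - b₃) - (a₄ - a₃) * (b₂ - b₁) with hD
  have hw₁ : z₁ * z₁⁻¹ = 1 := mul_inv_cancel₀ hz₁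
  have hw₂ : z₂ * z₂⁻¹ = 1 := mul_inv_cancel₀ hz₂
  have hw₃ : z₃ * z₃⁻¹ = 1 := mul_inv_cancel₀ hz₃
  simp only [mul_inv, inv_inv, inv_neg]
  linear_combination (D * ((-(1:ℂ)/4) * z₂⁻¹ + ((1:ℂ)/4) * z₂⁻¹ * z₃⁻¹ + (-(1:ℂ)/4) * z₂ + ((1:ℂ)/2) * z₂ * z₂⁻¹ + (-(1:ℂ)/4) * z₂ * z₂⁻¹ * z₂⁻¹ * z₃⁻¹ + (-(1:ℂ)/4) * z₂ * z₁⁻¹ * z₂⁻¹ * z₃⁻¹ + ((1:ℂ)/4) * z₂ * z₁⁻¹ * z₂⁻¹ * z₂⁻¹ * z₃⁻¹ + ((1:ℂ)/4) * z₂ * z₃ + (-(1:ℂ)/2) * z₂ * z₃ * z₂⁻¹ * z₃⁻¹ + ((1:ℂ)/4) * z₂ * z₃ * z₂⁻¹ * z₂⁻¹ * z₃⁻¹ + ((1:ℂ)/4) * z₂ * z₃ * z₁⁻¹ * z₂⁻¹ * z₃⁻¹ + (-(1:ℂ)/4) * z₂ * z₃ * z₁⁻¹ * z₂⁻¹ *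 z₂⁻¹ * z₃⁻¹ + (-(1:ℂ)/4) * z₂ * z₂ * z₃ * z₂⁻¹ + ((1:ℂ)/4) * z₂ * z₂ * z₃ * z₂⁻¹ * z₃⁻¹ + (-(1:ℂ)/4) * z₁ * z₂ * z₃ * z₂⁻¹ + ((1:ℂ)/4) * z₁ * z₂ * z₃ * z₂⁻¹ * z₃⁻¹ + ((1:ℂ)/4) * z₁ * z₂ * z₂ * z₃ * z₂⁻¹ + (-(1:ℂ)/4) * z₁ * z₂ * z₂ * z₃ * z₂⁻¹ * z₃⁻¹)) * hw₁
    + (D * (((1:ℂ)/2) + (-(1:ℂ)/4) * z₂⁻¹ * z₃⁻¹ + (-(1:ℂ)/4) * z₁⁻¹ + ((1:ℂ)/4) * z₁⁻¹ * z₂⁻¹ * z₃⁻¹ + (-(1:ℂ)/2) * z₃ * z₃⁻¹ + ((1:ℂ)/4) * z₃ * z₂⁻¹ * z₃⁻¹ + ((1:ℂ)/4) * z₃ * z₁⁻¹ * z₃⁻¹ + (-(1:ℂ)/4) * z₃ * z₁⁻¹ * z₂⁻¹ * z₃⁻¹ + (-(1:ℂ)/4) * z₂ * z₃ + ((1:ℂ)/4)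 * z₂ * z₃ * z₃⁻¹ + (-(1:ℂ)/4) * z₁ + ((1:ℂ)/4) * z₁ * z₃ * z₃⁻¹ + ((1:ℂ)/4) * z₁ * z₂ * z₃ + (-(1:ℂ)/4) * z₁ * z₂ * z₃ * z₃⁻¹)) * hw₂ + (D * ((-(1:ℂ)/2) + ((1:ℂ)/4) * z₂⁻¹ + ((1:ℂ)/4) * z₁⁻¹ + (-(1:ℂ)/4) * z₁⁻¹ * z₂⁻¹ + ((1:ℂ)/4) * z₂ + ((1:ℂ)/4) * z₁ + (-(1:ℂ)/4) * z₁ * z₂)) * hw₃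

theorem area_invariance_under_angle_negation (a₁ a₂ a₃ a₄ : ℂ) (θ₁ θ₂ θ₃ θ₄ : ℝ)
    (h : ∃ n : ℤ, θ₁ + θ₂ + θ₃ + θ₄ = (2 * n + 1) * Real.pi) :
    let A : ℂ × ℝ → ℂ × ℝ → ℂ × ℝ → ℂ × ℝ → ℝ := fun p q r s =>
      ((B q p r s - B p q r s) * (starRingEnd ℂ) (B p q s r - B p q r s)).im
    A (a₁, θ₁) (a₂, θ₂) (a₃, θ₃) (a₄, θ₄)
      = A (a₁, -θ₁) (a₂, -θ₂) (a₄, -θ₄) (a₃, -θ₃) := by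
  intro A
  obtain ⟨n, hn⟩ := h
  have him : ∀ x y : ℂ, x - (starRingEnd ℂ) x = y - (starRingEnd ℂ) y → x.im = y.im := by
    intro x y hxy
    have h2 := congrArg Complex.im hxy
    simp [Complex.conj_im] at h2
    linarith
  have hz₁ : Complex.exp (θ₁ * Complex.I) ≠ 0 := Complex.exp_ne_zero _
  have hz₂ : Complex.exp (θ₂ * Complex.I) ≠ 0 := Complex.exp_ne_zero _
  have hz₃ : Complex.exp (θ₃ * Complex.I) ≠ 0 := Complex.exp_ne_zero _
  have hsum : Complex.exp (θ₁ * Complex.I) * Complex.exp (θ₂ * Complex.I)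
      * Complex.exp (θ₃ * Complex.I) * Complex.exp (θ₄ * Complex.I) = -1 := by
    rw [← Complex.exp_add, ← Complex.exp_add, ← Complex.exp_add]
    have hc := congrArg (fun x : ℝ => (x : ℂ)) hn
    push_cast at hc
    have e1 : (↑θ₁ * Complex.I + ↑θ₂ * Complex.I + ↑θ₃ * Complex.I + ↑θ₄ * Complex.I : ℂ)
        = (n : ℂ) * (2 * ↑Real.pi * Complex.I) + ↑Real.pi * Complex.I := by
      rw [show (↑θ₁ * Complex.I + ↑θ₂ * Complex.I + ↑θ₃ * Complex.I + ↑θ₄ * Complex.I : ℂ)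
        = (↑θ₁ + ↑θ₂ + ↑θ₃ + ↑θ₄) * Complex.I by ring, hc]
      ring
    rw [e1, Complex.exp_add, Complex.exp_int_mul_two_pi_mul_I, Complex.exp_pi_mul_I]
    ring
  have hconj : ∀ θ : ℝ, (starRingEnd ℂ) (Complex.exp (θ * Complex.I))
      = (Complex.exp (θ * Complex.I))⁻¹ := by
    intro θ
    rw [← Complex.exp_conj, ← Complex.exp_neg]
    congr 1
    simp [Complex.conj_ofReal]
  have hz4 : Complex.exp (θ₄ * Complex.I)
      = -(Complex.exp (θ₁ * Complex.I) * Complex.exp (θ₂ * Complex.I)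
          * Complex.exp (θ₃ * Complex.I))⁻¹ := by
    field_simp
    rw [mul_comm Complex.I (θ₁:ℂ), mul_comm Complex.I (θ₂:ℂ), mul_comm Complex.I (θ₃:ℂ)]
    linear_combination hsum
  simp only [A, Bdiff1, Bdiff2]
  apply him
  simp only [Complex.ofReal_neg, neg_mul, Complex.exp_neg, hz4, map_sub, map_mul, map_add,
    map_one, map_inv₀, map_neg, map_div₀, map_ofNat, Complex.conj_conj, hconj, inv_inv]
  generalize hZ1 : Complex.exp ((θ₁ : ℂ) * Complex.I) = z₁ at hz₁ ⊢
  generalize hZ2 : Complex.exp ((θ₂ : ℂ) * Complex.I) = z₂ at hz₂ ⊢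
  generalize hZ3 : Complex.exp ((θ₃ : ℂ) * Complex.I) = z₃ at hz₃ ⊢
  exact aux_area_inv a₁ a₂ a₃ a₄ ((starRingEnd ℂ) a₁) ((starRingEnd ℂ) a₂)
    ((starRingEnd ℂ) a₃) ((starRingEnd ℂ) a₄) z₁ z₂ z₃ hz₁ hz₂ hz₃
end

section
/- Let a₁, a₂ ∈ ℂ and θ₁, θ₂ ∈ ℝ with θ₁ + θ₂ not an integer multiple of 2π, and define O₁₂(θ₁,θ₂) := (1/(2·(1 − e^{i(θ₁+θ₂)})))·(a₁·(1 − e^{iθ₁})·(1 + e^{iθ₂}) + a₂·(1 − e^{iθ₂})·(1 + e^{iθ₁})). Then O₁₂(θ₁,θ₂) = μ₁·a₁ + μ₂·a₂ where μ₁ = (1 − cos θ₁ + cos θ₂ − cos(θ₁+θ₂))/(2·(1 − cos(θ₁+θ₂))) and μ₂ = (1 − cos θ₂ + cos θ₁ − cos(θ₁+θ₂))/(2·(1 − cos(θ₁+θ₂))) are real numbers with μ₁ + μ₂ = 1 (so O₁₂ lies on the real affine line through a₁ and a₂); moreover O₁₂(−θ₁,−θ₂) = O₁₂(θ₁,θ₂).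 -/
open Complex

lemma cos_exp' (z : ℂ) : Complex.cos z = (Complex.exp (z*I) + (Complex.exp (z*I))⁻¹)/2 := by
  rw [← Complex.exp_neg]
  have h2 : Complex.exp (-(z*I)) = Complex.cos z - Complex.sin z * I := by
    rw [← neg_mul, Complex.exp_mul_I, Complex.cos_neg, Complex.sin_neg]; ring
  rw [Complex.exp_mul_I, h2]; ring

lemma exp_ne_one' {θ : ℝ} (h : ∀ k : ℤ, θ ≠ k * (2 * Real.pi)) :
    Complex.exp ((θ : ℂ) * Complex.I) ≠ 1 := by
  intro hx
  obtain ⟨n, hn⟩ := Complex.exp_eq_one_iff.mp hx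
  apply h n
  have h2 : (θ : ℂ) * I = (((n : ℝ) * (2 * Real.pi) : ℝ) : ℂ) * I := by
    push_cast; rw [hn]; ring
  have := mul_right_cancel₀ Complex.I_ne_zero h2
  exact_mod_cast this

lemma alg (a₁ a₂ z1 z2 : ℂ) (h1 : z1 ≠ 0) (h2 : z2 ≠ 0) (h : 1 - z1*z2 ≠ 0) :
    (1/(2*(1-z1*z2))) * (a₁*(1-z1)*(1+z2) + a₂*(1-z2)*(1+z1))
    = ((1 - (z1+z1⁻¹)/2 + (z2+z2⁻¹)/2 - (z1*z2+(z1*z2)⁻¹)/2) / (2*(1 - (z1*z2+(z1*z2)⁻¹)/2))) * a₁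
    + ((1 - (z2+z2⁻¹)/2 + (z1+z1⁻¹)/2 - (z1*z2+(z1*z2)⁻¹)/2) / (2*(1 - (z1*z2+(z1*z2)⁻¹)/2))) * a₂ := by
  have hw : z1*z2 ≠ 0 := mul_ne_zero h1 h2
  have hw1 : z1*z2 ≠ 1 := fun hc => h (by rw [hc]; ring)
  have hinv : 1 - (z1*z2)⁻¹ ≠ 0 := by
    rw [sub_ne_zero]
    exact fun hc => hw1 (by rw [← inv_inv (z1*z2), ← hc, inv_one])
  have e : 2*(1 - (z1*z2+(z1*z2)⁻¹)/2) = (1 - z1*z2)*(1-(z1*z2)⁻¹) := by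
    field_simp; ring
  have n1 : 1 - (z1+z1⁻¹)/2 + (z2+z2⁻¹)/2 - (z1*z2+(z1*z2)⁻¹)/2
      = ((1-z1)*(1+z2)*(1-(z1*z2)⁻¹))/2 := by
    field_simp; ring
  have n2 : 1 - (z2+z2⁻¹)/2 + (z1+z1⁻¹)/2 - (z1*z2+(z1*z2)⁻¹)/2
      = ((1-z2)*(1+z1)*(1-(z1*z2)⁻¹))/2 := by
    field_simp; ring
  rw [n1, n2, e]
  generalize hg : (z1*z2)⁻¹ = t at hinv ⊢
  field_simp

lemma key_s10 (a₁ a₂ : ℂ) (θ₁ θ₂ : ℝ)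
    (hE : Complex.exp (((θ₁ + θ₂ : ℝ) : ℂ) * Complex.I) ≠ 1) :
    (1 / (2 * (1 - Complex.exp ((θ₁ + θ₂ : ℝ) * Complex.I))))
        * (a₁ * (1 - Complex.exp (θ₁ * Complex.I)) * (1 + Complex.exp (θ₂ * Complex.I))
          + a₂ * (1 - Complex.exp (θ₂ * Complex.I)) * (1 + Complex.exp (θ₁ * Complex.I)))
    = ((((1 - Real.cos θ₁ + Real.cos θ₂ - Real.cos (θ₁ + θ₂))
        / (2 * (1 - Real.cos (θ₁ + θ₂))) : ℝ)) : ℂ) * a₁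
      + ((((1 - Real.cos θ₂ + Real.cos θ₁ - Real.cos (θ₁ + θ₂))
        / (2 * (1 - Real.cos (θ₁ + θ₂))) : ℝ)) : ℂ) * a₂ := by
  have h1 : Complex.exp ((θ₁:ℂ)*I) ≠ 0 := Complex.exp_ne_zero _
  have h2 : Complex.exp ((θ₂:ℂ)*I) ≠ 0 := Complex.exp_ne_zero _
  have hne : 1 - Complex.exp ((θ₁:ℂ)*I) * Complex.exp ((θ₂:ℂ)*I) ≠ 0 := by
    rw [sub_ne_zero]
    intro hc
    exact hE (by push_cast; rw [add_mul, Complex.exp_add, ← hc])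
  push_cast
  simp only [cos_exp', add_mul, Complex.exp_add]
  exact alg a₁ a₂ _ _ h1 h2 hne

theorem center_O12_on_line (a₁ a₂ : ℂ) (θ₁ θ₂ : ℝ)
    (h12 : ∀ k : ℤ, θ₁ + θ₂ ≠ k * (2 * Real.pi)) :
    let O : ℝ → ℝ → ℂ := fun φ₁ φ₂ =>
      (1 / (2 * (1 - Complex.exp ((φ₁ + φ₂ : ℝ) * Complex.I))))
        * (a₁ * (1 - Complex.exp (φ₁ * Complex.I)) * (1 + Complex.exp (φ₂ * Complex.I))
          + a₂ * (1 - Complex.exp (φ₂ * Complex.I)) * (1 + Complex.exp (φ₁ * Complex.I)))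
    let μ₁ : ℝ := (1 - Real.cos θ₁ + Real.cos θ₂ - Real.cos (θ₁ + θ₂))
      / (2 * (1 - Real.cos (θ₁ + θ₂)))
    let μ₂ : ℝ := (1 - Real.cos θ₂ + Real.cos θ₁ - Real.cos (θ₁ + θ₂))
      / (2 * (1 - Real.cos (θ₁ + θ₂)))
    O θ₁ θ₂ = (μ₁ : ℂ) * a₁ + (μ₂ : ℂ) * a₂ ∧ μ₁ + μ₂ = 1 ∧ O (-θ₁) (-θ₂) = O θ₁ θ₂ := by
  intro O μ₁ μ₂
  have hE : Complex.exp (((θ₁ + θ₂ : ℝ) : ℂ) * Complex.I) ≠ 1 := exp_ne_one' h12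
  have hcos : Real.cos (θ₁ + θ₂) ≠ 1 := by
    intro hc
    obtain ⟨n, hn⟩ := (Real.cos_eq_one_iff _).mp hc
    exact h12 n hn.symm
  have hd : 2 * (1 - Real.cos (θ₁ + θ₂)) ≠ 0 :=
    mul_ne_zero two_ne_zero (sub_ne_zero.mpr fun hc => hcos hc.symm)
  have h12' : ∀ k : ℤ, -θ₁ + -θ₂ ≠ k * (2 * Real.pi) := by
    intro k hk
    apply h12 (-k)
    push_cast
    linarith
  have hE' : Complex.exp (((-θ₁ + -θ₂ : ℝ) : ℂ) * Complex.I) ≠ 1 := exp_ne_one' h12'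
  have key1 := key_s10 a₁ a₂ θ₁ θ₂ hE
  have key2 := key_s10 a₁ a₂ (-θ₁) (-θ₂) hE'
  rw [show (-θ₁ + -θ₂ : ℝ) = -(θ₁ + θ₂) by ring, Real.cos_neg, Real.cos_neg, Real.cos_neg] at key2
  refine ⟨key1, ?_, ?_⟩
  · show μ₁ + μ₂ = 1
    simp only [μ₁, μ₂]
    field_simp
    ring
  · show O (-θ₁) (-θ₂) = O θ₁ θ₂
    simp only [O]
    rw [key1]
    convert key2 using 5 <;> push_cast <;> ring
end

section
/- Let a₁, a₂, a₃, a₄ ∈ ℂ and θ₁, θ₂, θ₃, θ₄ ∈ ℝ satisfy θ₁ = θ₃, θ₂ = θ₄, θ₁ + θ₂ = ((2n+1)/2)·π for some integer n, and a₁ − a₂ + a₃ − a₄ = 0 (i.e. the quadrilateral a₁a₂a₃a₄ is a parallelogram). Then B((a₁,θ₁),(a₂,θ₂),(a₃,θ₃),(a₄,θ₄)) − B((a₁,θ₁),(a₂,θ₂),(a₄,θ₄),(a₃,θ₃)) = −(−1)^n·i·(B((a₁,θ₁),(a₂,θ₂),(a₃,θ₃),(a₄,θ₄)) − B((a₂,θ₂),(a₁,θ₁),(a₃,θ₃),(a₄,θ₄)));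 consequently the parallelogram with vertices B((a₁,θ₁),(a₂,θ₂),(a₃,θ₃),(a₄,θ₄)), B((a₁,θ₁),(a₂,θ₂),(a₄,θ₄),(a₃,θ₃)), B((a₂,θ₂),(a₁,θ₁),(a₄,θ₄),(a₃,θ₃)), B((a₂,θ₂),(a₁,θ₁),(a₃,θ₃),(a₄,θ₄)) has two adjacent sides of equal length meeting at a right angle, hence is a square. -/
theorem squares_from_parallelogram (a₁ a₂ a₃ a₄ : ℂ) (θ₁ θ₂ θ₃ θ₄ : ℝ) (n : ℤ)
    (h13 : θ₁ = θ₃) (h24 : θ₂ = θ₄)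
    (hsum : θ₁ + θ₂ = ((2 * (n : ℝ) + 1) / 2) * Real.pi)
    (hpar : a₁ - a₂ + a₃ - a₄ = 0) :
    B (a₁, θ₁) (a₂, θ₂) (a₃, θ₃) (a₄, θ₄) - B (a₁, θ₁) (a₂, θ₂) (a₄, θ₄) (a₃, θ₃)
        = -((-1 : ℂ) ^ n) * Complex.I *
            (B (a₁, θ₁) (a₂, θ₂) (a₃, θ₃) (a₄, θ₄) - B (a₂, θ₂) (a₁, θ₁) (a₃, θ₃) (a₄, θ₄)) ∧
    ‖B (a₁, θ₁) (a₂, θ₂) (a₃, θ₃) (a₄, θ₄) - B (a₁, θ₁) (a₂, θ₂) (a₄, θ₄) (a₃, θ₃)‖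
        = ‖
            B (a₁, θ₁) (a₂, θ₂) (a₃, θ₃) (a₄, θ₄) - B (a₂, θ₂) (a₁, θ₁) (a₃, θ₃) (a₄, θ₄)‖ ∧
    ((B (a₁, θ₁) (a₂, θ₂) (a₃, θ₃) (a₄, θ₄) - B (a₁, θ₁) (a₂, θ₂) (a₄, θ₄) (a₃, θ₃))
        * (starRingEnd ℂ)
            (B (a₁, θ₁) (a₂, θ₂) (a₃, θ₃) (a₄, θ₄)
              - B (a₂, θ₂) (a₁, θ₁) (a₃, θ₃) (a₄, θ₄))).re = 0 := by
  subst h13 h24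
  have hEF : Complex.exp (θ₁ * Complex.I) * Complex.exp (θ₂ * Complex.I)
      = (-1 : ℂ) ^ n * Complex.I := by
    rw [← Complex.exp_add, ← add_mul, ← Complex.ofReal_add, hsum]
    rw [show ((((2 * (n : ℝ) + 1) / 2) * Real.pi : ℝ) : ℂ) * Complex.I
        = (n : ℂ) * (Real.pi * Complex.I) + ((Real.pi / 2 : ℝ) : ℂ) * Complex.I by
      push_cast; ring]
    rw [Complex.exp_add, Complex.exp_int_mul, Complex.exp_pi_mul_I]
    rw [show Complex.exp ((Real.pi / 2 : ℝ) * Complex.I) = Complex.I by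
      rw [Complex.exp_mul_I]; simp]
  have key : B (a₁, θ₁) (a₂, θ₂) (a₃, θ₁) (a₄, θ₂) - B (a₁, θ₁) (a₂, θ₂) (a₄, θ₂) (a₃, θ₁)
      = -((-1 : ℂ) ^ n) * Complex.I *
        (B (a₁, θ₁) (a₂, θ₂) (a₃, θ₁) (a₄, θ₂) - B (a₂, θ₂) (a₁, θ₁) (a₃, θ₁) (a₄, θ₂)) := by
    simp only [B, Complex.ofReal_add, add_mul, Complex.exp_add]
    linear_combination ((1 - Complex.exp (θ₁ * Complex.I)) * (1 - Complex.exp (θ₂ * Complex.I))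
        / 2 * (a₃ - a₄)) * hEF
      + ((1 - Complex.exp (θ₁ * Complex.I)) * (1 - Complex.exp (θ₂ * Complex.I)) / 2
        * ((-1 : ℂ) ^ n * Complex.I)) * hpar
  refine ⟨key, ?_, ?_⟩
  · rw [key]
    simp [map_mul, map_zpow₀]
  · rw [key]
    set D := B (a₁, θ₁) (a₂, θ₂) (a₃, θ₁) (a₄, θ₂) - B (a₂, θ₂) (a₁, θ₁) (a₃, θ₁) (a₄, θ₂)
    rcases Int.even_or_odd n with h | h
    · rw [h.neg_one_zpow]
      simp [Complex.mul_re, Complex.mul_im, Complex.conj_re, Complex.conj_im]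
      ring
    · rw [h.neg_one_zpow]
      simp [Complex.mul_re, Complex.mul_im, Complex.conj_re, Complex.conj_im]
      ring
end

section
/- Let a₁, a₂, a₃, a₄ ∈ ℂ and θ₁, θ₂, θ₃, θ₄ ∈ ℝ satisfy θ₁ = θ₃, θ₂ = θ₄, θ₁ + θ₂ = ((2n+1)/2)·π for some integer n, and a₁ − a₂ + a₃ − a₄ = 0. Then (B((a₁,θ₁),(a₂,θ₂),(a₃,θ₃),(a₄,θ₄)) + B((a₃,θ₃),(a₄,θ₄),(a₁,θ₁),(a₂,θ₂)))/2 = (a₁ + a₃)/2; that is, the center C = (a₁+a₃)/2 of the parallelogram a₁a₂a₃a₄ is the midpoint of the segment joining b₁₂₃₄ and b₃₄₁₂, so the point reflection about C maps b₁₂₃₄ to b₃₄₁₂. -/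
theorem center_is_midpoint (a₁ a₂ a₃ a₄ : ℂ) (θ₁ θ₂ θ₃ θ₄ : ℝ) (n : ℤ)
    (h13 : θ₁ = θ₃) (h24 : θ₂ = θ₄)
    (hsum : θ₁ + θ₂ = ((2 * (n : ℝ) + 1) / 2) * Real.pi)
    (hpar : a₁ - a₂ + a₃ - a₄ = 0) :
    (B (a₁, θ₁) (a₂, θ₂) (a₃, θ₃) (a₄, θ₄) + B (a₃, θ₃) (a₄, θ₄) (a₁, θ₁) (a₂, θ₂)) / 2
      = (a₁ + a₃) / 2 := by
  have h42 : a₄ = a₁ + a₃ - a₂ := by linear_combination -hpar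
  subst h13
  subst h24
  subst h42
  simp only [B]
  set e1 := Complex.exp (θ₁ * Complex.I) with he1
  set e2 := Complex.exp (θ₂ * Complex.I) with he2
  have hE : Complex.exp (((θ₁ + θ₂ : ℝ) : ℂ) * Complex.I) = e1 * e2 := by
    push_cast
    rw [add_mul, Complex.exp_add]
  have hE3 : Complex.exp (((θ₁ + θ₂ + θ₁ : ℝ) : ℂ) * Complex.I) = e1 * e2 * e1 := by
    push_cast
    rw [add_mul, add_mul, Complex.exp_add, Complex.exp_add]
  have hE2 : (e1 * e2) ^ 2 = -1 := by
    rw [← hE, ← Complex.exp_nat_mul]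
    have : (2 : ℕ) * (((θ₁ + θ₂ : ℝ) : ℂ) * Complex.I)
        = (n : ℂ) * (2 * Real.pi * Complex.I) + Real.pi * Complex.I := by
      push_cast [hsum]
      ring
    rw [this, Complex.exp_add, Complex.exp_int_mul_two_pi_mul_I, Complex.exp_pi_mul_I]
    ring
  rw [hE, hE3]
  linear_combination (-(a₁ + a₃) / 4) * hE2
end

section
/- Let a₁, a₂, a₃, a₄ ∈ ℂ and â₁, â₂, â₃, â₄ ∈ ℝ satisfy â₁ = â₃, â₂ = â₄, â₁ + â₂ = π, and a₁ − a₂ + a₃ − a₄ = 0. For n ∈ ℤ set α_{i,n} := ((2n+1)/2)·â_i and C_n := (B((a₁,α_{1,n}),(a₂,α_{2,n}),(a₃,α_{3,n}),(a₄,α_{4,n})) + B((a₂,α_{2,n}),(a₁,α_{1,n}),(a₄,α_{4,n}),(a₃,α_{3,n})))/2 (the center of the square P_{1234,n}). Then for every n ∈ ℤ, C_n − C_{n−2} = i·sin(â₁)·(cos(α_{1,n−1}) + (−1)^n·sin(α_{1,n−1}))·(a₂ − a₁). In particular, all the centers C_n with n even lie on a single line perpendicular to the line through a₁ and a₂, and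 likewise all the centers C_n with n odd lie on a single line perpendicular to the line through a₁ and a₂. -/
set_option maxHeartbeats 2000000


theorem centers_on_two_perpendicular_lines (a₁ a₂ a₃ a₄ : ℂ) (ahat₁ ahat₂ ahat₃ ahat₄ : ℝ)
    (h13 : ahat₁ = ahat₃) (h24 : ahat₂ = ahat₄) (hsum : ahat₁ + ahat₂ = Real.pi)
    (hpar : a₁ - a₂ + a₃ - a₄ = 0) :
    let α : ℤ → ℝ → ℝ := fun n t => ((2 * (n : ℝ) + 1) / 2) * t
    let C : ℤ → ℂ := fun n =>
      (B (a₁, α n ahat₁) (a₂, α n ahat₂) (a₃, α n ahat₃) (a₄, α n ahat₄)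
        + B (a₂, α n ahat₂) (a₁, α n ahat₁) (a₄, α n ahat₄) (a₃, α n ahat₃)) / 2
    (∀ n : ℤ, C n - C (n - 2)
        = Complex.I * ((Real.sin ahat₁
              * (Real.cos (α (n - 1) ahat₁) + (-1 : ℝ) ^ n * Real.sin (α (n - 1) ahat₁)) : ℝ) : ℂ)
            * (a₂ - a₁)) ∧
    (∀ m : ℤ, ∃ t : ℝ, C (2 * m) = C 0 + (t : ℂ) * (Complex.I * (a₂ - a₁))) ∧
    (∀ m : ℤ, ∃ t : ℝ, C (2 * m + 1) = C 1 + (t : ℂ) * (Complex.I * (a₂ - a₁))) := by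
  
  intro α C
  subst h13 h24
  have h2 : ahat₂ = Real.pi - ahat₁ := by linarith
  subst h2
  have h4 : a₄ = a₁ - a₂ + a₃ := by linear_combination -hpar
  subst h4
  set x := ahat₁ with hx_def
  set u : ℂ := Complex.exp (((x/2 : ℝ) : ℂ) * Complex.I) with hu_def
  have hune : u ≠ 0 := Complex.exp_ne_zero _
  have hI : Complex.exp (((Real.pi/2 : ℝ) : ℂ) * Complex.I) = Complex.I := by
    rw [Complex.exp_mul_I, ← Complex.ofReal_cos, ← Complex.ofReal_sin,
      Real.cos_pi_div_two, Real.sin_pi_div_two]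
    simp
  have master : ∀ (a b : ℤ) (r : ℝ), r = (a:ℝ)*(x/2) + (b:ℝ)*(Real.pi/2) →
      Complex.exp ((r : ℂ) * Complex.I) = u ^ a * Complex.I ^ b := by
    intro a b r h
    rw [show ((r : ℂ) * Complex.I) = (a:ℂ) * (((x/2:ℝ):ℂ) * Complex.I)
        + (b:ℂ) * (((Real.pi/2:ℝ):ℂ) * Complex.I) by rw [h]; push_cast; ring]
    rw [Complex.exp_add, Complex.exp_int_mul, Complex.exp_int_mul, hI]
  have hI42 : ∀ m : ℤ, Complex.I ^ (4*m+2 : ℤ) = -1 := by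
    intro m
    rw [show (4*m+2 : ℤ) = 2*(2*m+1) by ring, zpow_mul]
    rw [show (Complex.I ^ (2:ℤ)) = -1 by rw [zpow_two, Complex.I_mul_I]]
    exact Odd.neg_one_zpow ⟨m, by ring⟩
  have hCval : ∀ m : ℤ, C m =
      (1/4) * ((a₁*(1 - u^(2*m+1))
        + a₂*u^(2*m+1)*(1 - Complex.I^(2*m+1) * u^(-(2*m+1)))
        + a₃*(Complex.I^(2*m+1))*(1 - u^(2*m+1))
        + (a₁-a₂+a₃)*(Complex.I^(2*m+1))*u^(2*m+1)*(1 - Complex.I^(2*m+1)*u^(-(2*m+1))))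
      + (a₂*(1 - Complex.I^(2*m+1)*u^(-(2*m+1)))
        + a₁*(Complex.I^(2*m+1)*u^(-(2*m+1)))*(1 - u^(2*m+1))
        + (a₁-a₂+a₃)*(Complex.I^(2*m+1))*(1 - Complex.I^(2*m+1)*u^(-(2*m+1)))
        + a₃*(-u^(-(2*m+1)))*(1 - u^(2*m+1)))) := by
    intro m
    simp only [C, B, α]
    rw [master (2*m+1) 0 _ (by push_cast; ring)]
    rw [master (-(2*m+1)) (2*m+1) ((2 * (m:ℝ) + 1) / 2 * (Real.pi - x)) (by push_cast; ring)]
    rw [master 0 (2*m+1) ((2 * (m:ℝ) + 1) / 2 * x + (2 * (m:ℝ) + 1) / 2 * (Real.pi - x)) (by push_cast; ring)]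
    rw [master (2*m+1) (2*m+1) ((2 * (m:ℝ) + 1) / 2 * x + (2 * (m:ℝ) + 1) / 2 * (Real.pi - x) + (2 * (m:ℝ) + 1) / 2 * x) (by push_cast; ring)]
    rw [master 0 (2*m+1) ((2 * (m:ℝ) + 1) / 2 * (Real.pi - x) + (2 * (m:ℝ) + 1) / 2 * x) (by push_cast; ring)]
    rw [master (-(2*m+1)) (4*m+2) ((2 * (m:ℝ) + 1) / 2 * (Real.pi - x) + (2 * (m:ℝ) + 1) / 2 * x + (2 * (m:ℝ) + 1) / 2 * (Real.pi - x)) (by push_cast; ring)]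
    rw [hI42 m]
    simp only [zpow_zero, one_mul, mul_one]
    ring
  have hJJ : ∀ n : ℤ, Complex.I^(2*n+1) * Complex.I^(2*n+1) = -1 := by
    intro n
    rw [← zpow_add₀ Complex.I_ne_zero, show (2*n+1)+(2*n+1) = 4*n+2 by ring, hI42]
  have key : ∀ n : ℤ, C n - C (n - 2)
      = Complex.I * ((Real.sin x
            * (Real.cos (α (n - 1) x) + (-1 : ℝ) ^ n * Real.sin (α (n - 1) x)) : ℝ) : ℂ)
          * (a₂ - a₁) := by
    intro n
    rw [hCval n, hCval (n-2)]
    simp only [α]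
    push_cast
    simp only [Complex.sin, Complex.cos]
    rw [show Complex.exp (-(x:ℂ) * Complex.I) = u^(-2:ℤ) from by
      rw [show -(x:ℂ) * Complex.I = ((-x : ℝ) : ℂ) * Complex.I by push_cast; ring]
      rw [master (-2) 0 (-x) (by push_cast; ring)]; simp]
    rw [show Complex.exp ((x:ℂ) * Complex.I) = u^(2:ℤ) from by
      rw [show (x:ℂ) * Complex.I = ((x : ℝ) : ℂ) * Complex.I by push_cast; ring]
      rw [master 2 0 x (by push_cast; ring)]; simp]
    rw [show Complex.exp ((2 * ((n:ℂ) - 1) + 1) / 2 * (x:ℂ) * Complex.I) = u^(2*n-1) from by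
      rw [show (2 * ((n:ℂ) - 1) + 1) / 2 * (x:ℂ) * Complex.I
          = (((2 * ((n:ℝ) - 1) + 1) / 2 * x : ℝ) : ℂ) * Complex.I by push_cast; ring]
      rw [master (2*n-1) 0 _ (by push_cast; ring)]; simp]
    rw [show Complex.exp (-((2 * ((n:ℂ) - 1) + 1) / 2 * (x:ℂ)) * Complex.I) = u^(-(2*n-1)) from by
      rw [show -((2 * ((n:ℂ) - 1) + 1) / 2 * (x:ℂ)) * Complex.I
          = ((-((2 * ((n:ℝ) - 1) + 1) / 2 * x) : ℝ) : ℂ) * Complex.I by push_cast; ring]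
      rw [master (-(2*n-1)) 0 _ (by push_cast; ring)]; simp]
    rw [show ((-1:ℂ))^n = -Complex.I * Complex.I^(2*n+1) from by
      rw [show (2*n+1:ℤ) = 2*n + 1 from rfl, zpow_add₀ Complex.I_ne_zero, zpow_mul,
        show (Complex.I ^ (2:ℤ)) = -1 by rw [zpow_two, Complex.I_mul_I], zpow_one]
      linear_combination ((-1:ℂ)^n) * Complex.I_mul_I]
    rw [show u^(2*n-1) = u^(2*n+1) * u^(-2:ℤ) from by
      rw [← zpow_add₀ hune, show (2*n+1) + (-2:ℤ) = 2*n-1 by ring]]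
    rw [show u^(-(2*n-1)) = u^(-(2*n+1)) * u^(2:ℤ) from by
      rw [← zpow_add₀ hune, show -(2*n+1) + (2:ℤ) = -(2*n-1) by ring]]
    rw [show u^(2*(n-2)+1) = u^(2*n+1) * u^(-2:ℤ) * u^(-2:ℤ) from by
      rw [← zpow_add₀ hune, ← zpow_add₀ hune, show (2*n+1) + (-2:ℤ) + (-2:ℤ) = 2*(n-2)+1 by ring]]
    rw [show u^(-(2*(n-2)+1)) = u^(-(2*n+1)) * u^(2:ℤ) * u^(2:ℤ) from by
      rw [← zpow_add₀ hune, ← zpow_add₀ hune, show -(2*n+1) + (2:ℤ) + (2:ℤ) = -(2*(n-2)+1) by ring]]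
    rw [show Complex.I^(2*(n-2)+1) = Complex.I^(2*n+1) from by
      rw [show 2*(n-2)+1 = ((2*n+1) + (-2)) + (-2) by ring, zpow_add₀ Complex.I_ne_zero,
        zpow_add₀ Complex.I_ne_zero,
        show Complex.I^(-2:ℤ) = -1 from by rw [zpow_neg, zpow_two, Complex.I_mul_I]; norm_num]
      ring]
    have hED : u^(2*n+1) * u^(-(2*n+1)) = 1 := by
      rw [← zpow_add₀ hune, show (2*n+1) + -(2*n+1) = 0 by ring, zpow_zero]
    have hwv : u^(2:ℤ) * u^(-2:ℤ) = 1 := by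
      rw [← zpow_add₀ hune, show (2:ℤ) + -2 = 0 by ring, zpow_zero]
    have h0 : (Complex.I^(2*n+1) - Complex.I) * (Complex.I^(2*n+1) + Complex.I) = 0 := by
      linear_combination hJJ n - Complex.I_mul_I
    rcases mul_eq_zero.mp h0 with h | h
    · rw [sub_eq_zero] at h
      rw [h]
      linear_combination (((1/4) * a₃ + (-1/4) * a₃ * Complex.I^2 + (-1/4) * a₂ * Complex.I + (1/4) * a₂ * Complex.I^2 + (-1/4) * a₁ * Complex.I + (-1/4) * a₁ * Complex.I^2 + (-1/4) * (u ^ (2:ℤ))^2 * (u ^ (-2:ℤ))^2 * a₃ + (1/4) * (u ^ (2:ℤ))^2 * (u ^ (-2:ℤ))^2 * a₃ * Complex.I^2 + (1/4) * (u ^ (2:ℤ))^2 * (u ^ (-2:ℤ))^2 * a₂ * Complex.I + (-1/4) * (u ^ (2:ℤ))^2 * (u ^ (-2:ℤ))^2 * a₂ * Complex.I^2 + (1/4) * (u ^ (2:ℤ))^2 * (u ^ (-2:ℤ))^2 * a₁ * Complex.I + (1/4) * (u ^ (2:ℤ))^2 * (u ^ (-2:ℤ))^2 * a₁ * Complex.I^2))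 * hED + (((-1/4) * a₃ + (1/4) * a₃ * Complex.I^2 + (1/4) * a₂ * Complex.I + (-1/4) * a₂ * Complex.I^2 + (1/4) * a₁ * Complex.I + (1/4) * a₁ * Complex.I^2 + (-1/4) * (u ^ (2:ℤ)) * (u ^ (-2:ℤ)) * a₃ + (1/4) * (u ^ (2:ℤ)) * (u ^ (-2:ℤ)) * a₃ * Complex.I^2 + (1/4) * (u ^ (2:ℤ)) * (u ^ (-2:ℤ)) * a₂ * Complex.I + (-1/4) * (u ^ (2:ℤ)) * (u ^ (-2:ℤ)) * a₂ * Complex.I^2 + (1/4) * (u ^ (2:ℤ)) * (u ^ (-2:ℤ)) * a₁ * Complex.I + (1/4) * (u ^ (2:ℤ)) * (u ^ (-2:ℤ)) * a₁ * Complex.I^2 + (-1/4) * (u ^ (-(2*n+1))) * a₂ * Complex.I^2 + (1/4) * (u ^ (-(2*n+1))) * a₂ * Complex.I^5 + (1/4) * (u ^ (-(2*n+1))) * a₁ * Complex.I^2 + (-1/4) * (u ^ (-(2*n+1))) * a₁ * Complex.I^5 + (1/4) * (u ^ (2*n+1)) * a₂ * Complex.I^2 + (1/4) * (u ^ (2*n+1))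 * a₂ * Complex.I^5 + (-1/4) * (u ^ (2*n+1)) * a₁ * Complex.I^2 + (-1/4) * (u ^ (2*n+1)) * a₁ * Complex.I^5)) * hwv + (((-1/4) * (u ^ (-(2*n+1))) * a₃ + (-1/4) * (u ^ (-(2*n+1))) * a₂ * Complex.I + (1/4) * (u ^ (-(2*n+1))) * a₂ * Complex.I^3 + (1/4) * (u ^ (-(2*n+1))) * a₁ * Complex.I + (-1/4) * (u ^ (-(2*n+1))) * a₁ * Complex.I^3 + (1/4) * (u ^ (-(2*n+1))) * (u ^ (2:ℤ))^2 * a₃ + (1/4) * (u ^ (-(2*n+1))) * (u ^ (2:ℤ))^2 * a₂ * Complex.I + (-1/4) * (u ^ (-(2*n+1))) * (u ^ (2:ℤ))^2 * a₂ * Complex.I^3 + (-1/4) * (u ^ (-(2*n+1))) * (u ^ (2:ℤ))^2 * a₁ * Complex.I + (1/4) * (u ^ (-(2*n+1))) * (u ^ (2:ℤ))^2 * a₁ * Complex.I^3 + (1/4) * (u ^ (2*n+1)) * a₂ + (-1/4) * (u ^ (2*n+1)) * a₂ * Complex.I + (1/4) * (u ^ (2*n+1)) * a₂ * Complex.I^3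 + (-1/4) * (u ^ (2*n+1)) * a₁ + (1/4) * (u ^ (2*n+1)) * a₁ * Complex.I + (-1/4) * (u ^ (2*n+1)) * a₁ * Complex.I^3 + (-1/4) * (u ^ (2*n+1)) * (u ^ (-2:ℤ))^2 * a₂ + (1/4) * (u ^ (2*n+1)) * (u ^ (-2:ℤ))^2 * a₂ * Complex.I + (-1/4) * (u ^ (2*n+1)) * (u ^ (-2:ℤ))^2 * a₂ * Complex.I^3 + (1/4) * (u ^ (2*n+1)) * (u ^ (-2:ℤ))^2 * a₁ + (-1/4) * (u ^ (2*n+1)) * (u ^ (-2:ℤ))^2 * a₁ * Complex.I + (1/4) * (u ^ (2*n+1)) * (u ^ (-2:ℤ))^2 * a₁ * Complex.I^3)) * Complex.I_mul_I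
    · have h' : Complex.I^(2*n+1) = -Complex.I := by linear_combination h
      rw [h']
      linear_combination (((1/4) * a₃ + (-1/4) * a₃ * Complex.I^2 + (1/4) * a₂ * Complex.I + (1/4) * a₂ * Complex.I^2 + (1/4) * a₁ * Complex.I + (-1/4) * a₁ * Complex.I^2 + (-1/4) * (u ^ (2:ℤ))^2 * (u ^ (-2:ℤ))^2 * a₃ + (1/4) * (u ^ (2:ℤ))^2 * (u ^ (-2:ℤ))^2 * a₃ * Complex.I^2 + (-1/4) * (u ^ (2:ℤ))^2 * (u ^ (-2:ℤ))^2 * a₂ * Complex.I + (-1/4) * (u ^ (2:ℤ))^2 * (u ^ (-2:ℤ))^2 * a₂ * Complex.I^2 + (-1/4) * (u ^ (2:ℤ))^2 * (u ^ (-2:ℤ))^2 * a₁ * Complex.I + (1/4) * (u ^ (2:ℤ))^2 * (u ^ (-2:ℤ))^2 * a₁ * Complex.I^2)) * hED + (((-1/4) * a₃ + (1/4) * a₃ * Complex.I^2 + (-1/4) * a₂ * Complex.I + (-1/4) * a₂ * Complex.I^2 + (-1/4) * a₁ * Complex.I + (1/4) * a₁ * Complex.I^2 + (-1/4) * (u ^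 (2:ℤ)) * (u ^ (-2:ℤ)) * a₃ + (1/4) * (u ^ (2:ℤ)) * (u ^ (-2:ℤ)) * a₃ * Complex.I^2 + (-1/4) * (u ^ (2:ℤ)) * (u ^ (-2:ℤ)) * a₂ * Complex.I + (-1/4) * (u ^ (2:ℤ)) * (u ^ (-2:ℤ)) * a₂ * Complex.I^2 + (-1/4) * (u ^ (2:ℤ)) * (u ^ (-2:ℤ)) * a₁ * Complex.I + (1/4) * (u ^ (2:ℤ)) * (u ^ (-2:ℤ)) * a₁ * Complex.I^2 + (-1/4) * (u ^ (-(2*n+1))) * a₂ * Complex.I^2 + (-1/4) * (u ^ (-(2*n+1))) * a₂ * Complex.I^5 + (1/4) * (u ^ (-(2*n+1))) * a₁ * Complex.I^2 + (1/4) * (u ^ (-(2*n+1))) * a₁ * Complex.I^5 + (1/4) * (u ^ (2*n+1)) * a₂ * Complex.I^2 + (-1/4) * (u ^ (2*n+1)) * a₂ * Complex.I^5 + (-1/4) * (u ^ (2*n+1)) * a₁ * Complex.I^2 + (1/4) * (u ^ (2*n+1)) * a₁ * Complex.I^5)) * hwv + (((-1/4) * (u ^ (-(2*n+1))) * a₃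 + (1/4) * (u ^ (-(2*n+1))) * a₂ * Complex.I + (-1/4) * (u ^ (-(2*n+1))) * a₂ * Complex.I^3 + (-1/4) * (u ^ (-(2*n+1))) * a₁ * Complex.I + (1/4) * (u ^ (-(2*n+1))) * a₁ * Complex.I^3 + (1/4) * (u ^ (-(2*n+1))) * (u ^ (2:ℤ))^2 * a₃ + (-1/4) * (u ^ (-(2*n+1))) * (u ^ (2:ℤ))^2 * a₂ * Complex.I + (1/4) * (u ^ (-(2*n+1))) * (u ^ (2:ℤ))^2 * a₂ * Complex.I^3 + (1/4) * (u ^ (-(2*n+1))) * (u ^ (2:ℤ))^2 * a₁ * Complex.I + (-1/4) * (u ^ (-(2*n+1))) * (u ^ (2:ℤ))^2 * a₁ * Complex.I^3 + (1/4) * (u ^ (2*n+1)) * a₂ + (1/4) * (u ^ (2*n+1)) * a₂ * Complex.I + (-1/4) * (u ^ (2*n+1)) * a₂ * Complex.I^3 + (-1/4) * (u ^ (2*n+1)) * a₁ + (-1/4) * (u ^ (2*n+1)) * a₁ * Complex.I + (1/4) * (u ^ (2*n+1)) * a₁ * Complex.I^3 + (-1/4) * (u ^ (2*n+1)) * (u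 ^ (-2:ℤ))^2 * a₂ + (-1/4) * (u ^ (2*n+1)) * (u ^ (-2:ℤ))^2 * a₂ * Complex.I + (1/4) * (u ^ (2*n+1)) * (u ^ (-2:ℤ))^2 * a₂ * Complex.I^3 + (1/4) * (u ^ (2*n+1)) * (u ^ (-2:ℤ))^2 * a₁ + (1/4) * (u ^ (2*n+1)) * (u ^ (-2:ℤ))^2 * a₁ * Complex.I + (-1/4) * (u ^ (2*n+1)) * (u ^ (-2:ℤ))^2 * a₁ * Complex.I^3)) * Complex.I_mul_I
  have step : ∀ k : ℤ, ∃ r : ℝ, C k - C (k - 2) = (r:ℂ) * (Complex.I * (a₂ - a₁)) := by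
    intro k
    refine ⟨Real.sin x * (Real.cos (α (k-1) x) + (-1:ℝ)^k * Real.sin (α (k-1) x)), ?_⟩
    rw [key k]; push_cast; ring
  refine ⟨key, ?_, ?_⟩
  · intro m
    induction m using Int.induction_on with
    | zero => exact ⟨0, by norm_num⟩
    | succ i ih =>
        obtain ⟨t, ht⟩ := ih
        obtain ⟨r, hr⟩ := step (2*((i:ℤ)+1))
        rw [show (2*((i:ℤ)+1) - 2) = 2*(i:ℤ) by ring] at hr
        refine ⟨t + r, ?_⟩
        push_cast
        linear_combination ht + hr
    | pred i ih =>
        obtain ⟨t, ht⟩ := ih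
        obtain ⟨r, hr⟩ := step (2*(-(i:ℤ)))
        rw [show (2*(-(i:ℤ)) - 2) = 2*(-(i:ℤ)-1) by ring] at hr
        refine ⟨t - r, ?_⟩
        push_cast
        linear_combination ht - hr
  · intro m
    induction m using Int.induction_on with
    | zero => exact ⟨0, by norm_num⟩
    | succ i ih =>
        obtain ⟨t, ht⟩ := ih
        obtain ⟨r, hr⟩ := step (2*((i:ℤ)+1)+1)
        rw [show (2*((i:ℤ)+1)+1 - 2) = 2*(i:ℤ)+1 by ring] at hr
        refine ⟨t + r, ?_⟩
        push_cast
        linear_combination ht + hr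
    | pred i ih =>
        obtain ⟨t, ht⟩ := ih
        obtain ⟨r, hr⟩ := step (2*(-(i:ℤ))+1)
        rw [show (2*(-(i:ℤ))+1 - 2) = 2*(-(i:ℤ)-1)+1 by ring] at hr
        refine ⟨t - r, ?_⟩
        push_cast
        linear_combination ht - hr
end

section
/- Let a₁, a₂, a₃, a₄ ∈ ℂ and θ₁, θ₂, θ₃, θ₄ ∈ ℝ satisfy θ₁ = θ₃, θ₂ = θ₄, θ₁ + θ₂ = ((2n+1)/2)·π for some integer n, and a₁ − a₂ + a₃ − a₄ = 0. Then B((a₁,θ₁),(a₂,θ₂),(a₃,θ₃),(a₄,θ₄)) − B((a₂,θ₂),(a₁,θ₁),(a₄,θ₄),(a₃,θ₃)) = (a₁ − a₂)·(1 − cos θ₁ − (−1)^n·sin θ₁); in particular this difference is a real scalar multiple of a₁ − a₂, so the diagonal b₁₂₃₄b₂₁₄₃ of the square P₁₂₃₄ is parallel to the side a₁a₂. -/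
lemma scalar_key (C S v i : ℂ) (h1 : C^2 + S^2 = 1) (h2 : v^2 = 1) (h3 : i^2 = -1) :
    (1/2) * (1 - (C + S*i)) * (1 - (v*i*(C - S*i))) * (1 - (C + S*i) * (v*i*(C - S*i)))
      = 1 - C - v*S := by
  linear_combination ((1/2)*S*v + (1/2)*S^3*v + (-1/2)*S^3*v*i^2 + (-1/2)*S^3*v^2*i
      + (1/2)*S^3*v^2*i^3 + (-1/2)*S^4*v^2 + (1/2)*S^4*v^2*i^2 + (-1/2)*S^4*v^2*i^4
      + (-1/2)*C*S^2*v*i + (1/2)*C*S^2*v^2 + (-1/2)*C*S^2*v^2*i^2 + (1/2)*C^2*S*v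
      + (-1/2)*C^2*S*v^2*i + (-1)*C^2*S^2*v^2 + (1)*C^2*S^2*v^2*i^2 + (1/2)*C^3*v^2
      + (-1/2)*C^4*v^2) * h3
    + ((1/2)*S^3*i + (1/2)*S^4 + (-1/2)*C*S^2 + (1/2)*C^2*S*i + (1)*C^2*S^2
      + (-1/2)*C^3 + (1/2)*C^4) * h2
    + ((1/2) + (1/2)*S*i + (-1/2)*S*v + (1/2)*S^2 + (-1/2)*C + (1/2)*C*v*i + (1/2)*C^2) * h1

theorem diagonal_parallel_to_side (a₁ a₂ a₃ a₄ : ℂ) (θ₁ θ₂ θ₃ θ₄ : ℝ) (n : ℤ)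
    (h13 : θ₁ = θ₃) (h24 : θ₂ = θ₄)
    (hsum : θ₁ + θ₂ = ((2 * (n : ℝ) + 1) / 2) * Real.pi)
    (hpar : a₁ - a₂ + a₃ - a₄ = 0) :
    B (a₁, θ₁) (a₂, θ₂) (a₃, θ₃) (a₄, θ₄) - B (a₂, θ₂) (a₁, θ₁) (a₄, θ₄) (a₃, θ₃)
        = (a₁ - a₂) * ((1 - Real.cos θ₁ - (-1 : ℝ) ^ n * Real.sin θ₁ : ℝ) : ℂ) ∧
    ∃ t : ℝ, B (a₁, θ₁) (a₂, θ₂) (a₃, θ₃) (a₄, θ₄)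
        - B (a₂, θ₂) (a₁, θ₁) (a₄, θ₄) (a₃, θ₃) = (t : ℂ) * (a₁ - a₂) := by
  subst h13 h24
  have hsplit : ∀ x y : ℝ, Complex.exp ((x + y : ℝ) * Complex.I)
      = Complex.exp ((x : ℝ) * Complex.I) * Complex.exp ((y : ℝ) * Complex.I) := by
    intro x y
    rw [← Complex.exp_add]
    congr 1
    push_cast
    ring
  have hpi2 : Complex.exp ((θ₁ + θ₂ : ℝ) * Complex.I) = (-1 : ℂ) ^ n * Complex.I := by
    rw [hsum]
    have h : ((((2 * (n : ℝ) + 1) / 2) * Real.pi : ℝ) : ℂ) * Complex.I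
        = (n : ℂ) * ((Real.pi : ℂ) * Complex.I) + ((Real.pi / 2 : ℝ) : ℂ) * Complex.I := by
      push_cast; ring
    rw [h, Complex.exp_add, Complex.exp_int_mul, Complex.exp_pi_mul_I, Complex.exp_mul_I]
    simp
  have pyth : ((Real.cos θ₁ : ℂ))^2 + ((Real.sin θ₁ : ℂ))^2 = 1 := by
    exact_mod_cast Real.cos_sq_add_sin_sq θ₁
  have hE1 : Complex.exp ((θ₁ : ℝ) * Complex.I)
      = (Real.cos θ₁ : ℂ) + (Real.sin θ₁ : ℂ) * Complex.I := by
    rw [Complex.exp_mul_I, Complex.ofReal_cos, Complex.ofReal_sin]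
  have key12 : Complex.exp ((θ₁ : ℝ) * Complex.I) * Complex.exp ((θ₂ : ℝ) * Complex.I)
      = (-1 : ℂ) ^ n * Complex.I := by
    rw [← hsplit]; exact hpi2
  rw [hE1] at key12
  have hE2 : Complex.exp ((θ₂ : ℝ) * Complex.I)
      = (-1 : ℂ) ^ n * Complex.I * ((Real.cos θ₁ : ℂ) - (Real.sin θ₁ : ℂ) * Complex.I) := by
    linear_combination ((Real.cos θ₁ : ℂ) - (Real.sin θ₁ : ℂ) * Complex.I) * key12
      + (- Complex.exp ((θ₂ : ℝ) * Complex.I)) * pyth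
      + (Complex.exp ((θ₂ : ℝ) * Complex.I) * ((Real.sin θ₁ : ℂ))^2) * Complex.I_sq
  have hu : ((-1 : ℂ) ^ n) ^ 2 = 1 := by
    rw [← zpow_natCast ((-1 : ℂ) ^ n) 2, ← zpow_mul, mul_comm, zpow_mul]
    norm_num
  have step2 : (1/2) * (1 - Complex.exp ((θ₁ : ℝ) * Complex.I))
      * (1 - Complex.exp ((θ₂ : ℝ) * Complex.I))
      * (1 - Complex.exp ((θ₁ : ℝ) * Complex.I) * Complex.exp ((θ₂ : ℝ) * Complex.I))
      = 1 - (Real.cos θ₁ : ℂ) - (-1 : ℂ) ^ n * (Real.sin θ₁ : ℂ) := by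
    rw [hE1, hE2]
    exact scalar_key _ _ _ _ pyth hu Complex.I_sq
  have main : B (a₁, θ₁) (a₂, θ₂) (a₃, θ₁) (a₄, θ₂) - B (a₂, θ₂) (a₁, θ₁) (a₄, θ₂) (a₃, θ₁)
      = (a₁ - a₂) * ((1 - Real.cos θ₁ - (-1 : ℝ) ^ n * Real.sin θ₁ : ℝ) : ℂ) := by
    simp only [B]
    rw [hsplit (θ₁ + θ₂) θ₁, hsplit θ₁ θ₂, hsplit (θ₂ + θ₁) θ₂, hsplit θ₂ θ₁]
    push_cast
    simp only [Complex.ofReal_cos, Complex.ofReal_sin] at step2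
    linear_combination ((1 - Complex.exp ((θ₁ : ℝ) * Complex.I))
        * (1 - Complex.exp ((θ₂ : ℝ) * Complex.I))
        * Complex.exp ((θ₁ : ℝ) * Complex.I) * Complex.exp ((θ₂ : ℝ) * Complex.I) / 2) * hpar
      + (a₁ - a₂) * step2
  refine ⟨main, ⟨1 - Real.cos θ₁ - (-1 : ℝ) ^ n * Real.sin θ₁, ?_⟩⟩
  rw [main]
  ring
end

section
/- Let a₁, a₂, a₃, a₄ ∈ ℂ and θ₁, θ₂, θ₃, θ₄ ∈ ℝ satisfy θ₁ = θ₃, θ₂ = θ₄, θ₁ + θ₂ = ((2n+1)/2)·π for some integer n, and a₁ − a₂ + a₃ − a₄ = 0. For a permutation (i,j,k,l) of (1,2,3,4) define C(i,j,k,l) := (B((a_i,θ_i),(a_j,θ_j),(a_k,θ_k),(a_l,θ_l)) + B((a_j,θ_j),(a_i,θ_i),(a_l,θ_l),(a_k,θ_k)))/2 (the center of the square P_{ijkl}). Then C(1,2,3,4) + C(3,4,1,2) = a₁ + a₃ and C(3,2,1,4) + C(1,4,3,2) = a₁ + a₃; consequently C(1,2,3,4) − C(3,2,1,4) + C(3,4,1,2)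 − C(1,4,3,2) = 0, i.e. the quadrilateral with vertices C(1,2,3,4), C(3,2,1,4), C(3,4,1,2), C(1,4,3,2) is a parallelogram whose center coincides with the center (a₁+a₃)/2 of the parallelogram a₁a₂a₃a₄. -/
theorem centers_form_parallelogram (a₁ a₂ a₃ a₄ : ℂ) (θ₁ θ₂ θ₃ θ₄ : ℝ) (n : ℤ)
    (h13 : θ₁ = θ₃) (h24 : θ₂ = θ₄)
    (hsum : θ₁ + θ₂ = ((2 * (n : ℝ) + 1) / 2) * Real.pi)
    (hpar : a₁ - a₂ + a₃ - a₄ = 0) :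
    let C : ℂ × ℝ → ℂ × ℝ → ℂ × ℝ → ℂ × ℝ → ℂ := fun p q r s => (B p q r s + B q p s r) / 2
    C (a₁, θ₁) (a₂, θ₂) (a₃, θ₃) (a₄, θ₄) + C (a₃, θ₃) (a₄, θ₄) (a₁, θ₁) (a₂, θ₂)
        = a₁ + a₃ ∧
    C (a₃, θ₃) (a₂, θ₂) (a₁, θ₁) (a₄, θ₄) + C (a₁, θ₁) (a₄, θ₄) (a₃, θ₃) (a₂, θ₂)
        = a₁ + a₃ ∧
    C (a₁, θ₁) (a₂, θ₂) (a₃, θ₃) (a₄, θ₄) - C (a₃, θ₃) (a₂, θ₂) (a₁, θ₁) (a₄, θ₄)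
        + C (a₃, θ₃) (a₄, θ₄) (a₁, θ₁) (a₂, θ₂) - C (a₁, θ₁) (a₄, θ₄) (a₃, θ₃) (a₂, θ₂)
        = 0 := by
  subst h13 h24
  intro C
  set x := Complex.exp (θ₁ * Complex.I) with hx
  set y := Complex.exp (θ₂ * Complex.I) with hy
  have e12 : Complex.exp (((θ₁ + θ₂ : ℝ) : ℂ) * Complex.I) = x * y := by
    push_cast
    rw [add_mul, Complex.exp_add]
  have e21 : Complex.exp (((θ₂ + θ₁ : ℝ) : ℂ) * Complex.I) = y * x := by
    push_cast
    rw [add_mul, Complex.exp_add]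
  have e121 : Complex.exp (((θ₁ + θ₂ + θ₁ : ℝ) : ℂ) * Complex.I) = x * y * x := by
    push_cast
    rw [add_mul, add_mul, Complex.exp_add, Complex.exp_add]
  have e212 : Complex.exp (((θ₂ + θ₁ + θ₂ : ℝ) : ℂ) * Complex.I) = y * x * y := by
    push_cast
    rw [add_mul, add_mul, Complex.exp_add, Complex.exp_add]
  have hu : (x * y) ^ 2 = -1 := by
    rw [hx, hy, ← Complex.exp_add, ← Complex.exp_nat_mul]
    have : (2 : ℕ) * (↑θ₁ * Complex.I + ↑θ₂ * Complex.I)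
        = (n : ℂ) * (2 * Real.pi * Complex.I) + Real.pi * Complex.I := by
      have : ((θ₁ : ℂ) + θ₂) = ((2 * (n : ℝ) + 1) / 2) * Real.pi := by
        exact_mod_cast congrArg (Complex.ofReal) hsum
      push_cast at this ⊢
      linear_combination (2 * Complex.I) * this
    rw [this, Complex.exp_add, Complex.exp_int_mul_two_pi_mul_I, Complex.exp_pi_mul_I]
    ring
  have key : ∀ b₁ b₂ b₃ b₄ : ℂ, b₁ - b₂ + b₃ - b₄ = 0 →
      C (b₁, θ₁) (b₂, θ₂) (b₃, θ₁) (b₄, θ₂) + C (b₃, θ₁) (b₄, θ₂) (b₁, θ₁) (b₂, θ₂)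
        = b₁ + b₃ := by
    intro b₁ b₂ b₃ b₄ hb
    simp only [C, B, e12, e21, e121, e212]
    linear_combination (-(b₁ + b₃) / 2) * hu
      + (-(x ^ 2 * y - x ^ 2 * y ^ 2 - x * y ^ 2 + x + 1 - y) / 4) * hb
  have h1 := key a₁ a₂ a₃ a₄ hpar
  have h2 := key a₃ a₂ a₁ a₄ (by linear_combination hpar)
  exact ⟨h1, by linear_combination h2, by linear_combination h1 - h2⟩
end
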